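/- arXiv:2508.06043 — 3 statements merged into one kernel-verified Lean document; each statement's English description precedes it below -/
import Mathlib

section
/- Let t ≥ r ≥ 3 be integers, let a ≥ 2(r-1) and b ≥ (a-1)! + 1. Then for every ε > 0 there exists N such that for all n ≥ N, ex(n, K_r, (t+1)K_{a,b}) ≤ Σ_{s=0}^{r} C(t, r-s)·(1/s! + ε)·(b-1)^{s(s-1)/(2a)}·(n-t)^{s - s(s-1)/(2a)}. -/
open Finset

/-- `F.ContainsCopy G` means `G` contains a subgraph isomorphic to `F`,
i.e. there is an injective graph homomorphism from `F` to `G`. -/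
def SimpleGraph.ContainsCopy {α β : Type*} (F : SimpleGraph α) (G : SimpleGraph β) : Prop :=
  ∃ f : F →g G, Function.Injective f

/-- `F.FreeIn G` means `G` is `F`-free. -/
def SimpleGraph.FreeIn {α β : Type*} (F : SimpleGraph α) (G : SimpleGraph β) : Prop :=
  ¬ F.ContainsCopy G

/-- `cliqueCount G r` is the number of `r`-cliques of `G` (copies of `K_r`). -/
noncomputable def cliqueCount {β : Type*} (G : SimpleGraph β) (r : ℕ) : ℕ :=
  Nat.card {s : Finset β // G.IsNClique r s}

/-- `cliqueCountOn G r v` is the number of `r`-cliques of `G` containing the vertex `v`. -/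
noncomputable def cliqueCountOn {β : Type*} (G : SimpleGraph β) (r : ℕ) (v : β) : ℕ :=
  Nat.card {s : Finset β // G.IsNClique r s ∧ v ∈ s}

/-- The generalized Turán number `ex(n, K_r, F)`: the maximum number of `r`-cliques
in an `F`-free graph on `n` vertices. -/
noncomputable def exTuran {α : Type*} (n r : ℕ) (F : SimpleGraph α) : ℕ :=
  sSup {m : ℕ | ∃ G : SimpleGraph (Fin n), F.FreeIn G ∧ m = cliqueCount G r}

/-- `multiCopies m F` is the vertex-disjoint union of `m` copies of `F`. -/
def multiCopies {α : Type*} (m : ℕ) (F : SimpleGraph α) : SimpleGraph (Fin m × α) where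
  Adj x y := x.1 = y.1 ∧ F.Adj x.2 y.2
  symm := ⟨fun _ _ h => ⟨h.1.symm, h.2.symm⟩⟩
  loopless := ⟨fun x h => F.irrefl h.2⟩

/-- The join `G ∨ H` of two vertex-disjoint graphs: their disjoint union together with
all edges between them. -/
def joinG {α β : Type*} (G : SimpleGraph α) (H : SimpleGraph β) : SimpleGraph (α ⊕ β) where
  Adj x y := match x, y with
    | Sum.inl u, Sum.inl v => G.Adj u v
    | Sum.inr u, Sum.inr v => H.Adj u v
    | _, _ => True
  symm := ⟨by rintro (u|u) (v|v) h <;> first | exact h.symm | trivial⟩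
  loopless := ⟨by rintro (u|u) h <;> exact absurd h (by simp)⟩

/-!
Delete the vertices `W` of a maximal family of vertex-disjoint copies of `K_{a,b}` in `G`: there
are at most `t` copies, so `|W| ≤ t(a + b)`, and `G - W` is `K_{a,b}`-free. Write
`γ(s) = s(s-1)/(2a)` and `e(s) = s - γ(s)`. An `r`-clique meeting `W` in `j ≥ 1` vertices is a
`j`-subset of `W` plus an `(r - j)`-clique of `G - W`, so these cliques number `O(n^e(r-1))`, and
`e(r-1) < e(r)`. The cliques avoiding `W` number at most `(1/r! + ε/2) (b-1)^γ(r) n^e(r) + O(1)`,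
which for large `n` is below the `s = r` summand of the claimed bound.

That clique bound, for `s`-cliques in a `K_{a,b}`-free vertex set `X` of size `m`, is proved by
induction on `s` with `a` decreasing: each `(s+1)`-clique is counted once from each of its
vertices `v`, and the neighbourhood of `v` in `X`, of size `d_v`, is `K_{a-1,b}`-free, so its
`s`-cliques number about `(1/s!) (b-1)^γ' d_v^e'` (exponents for `a - 1`). Hölder's inequality
and the Kővári–Sós–Turán count `∑_v C(d_v, a) ≤ (b-1) C(m, a)` give
`∑_v d_v^e' ≲ ((b-1) m^a)^(e'/a) m^(1 - e'/a)`, and the exponents add up to those for `s + 1`.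
-/

open Filter Asymptotics Topology
open scoped Classical Nat

theorem exists_pow_le_descFactorial_add (a : ℕ) {η : ℝ} (hη : 0 < η) :
    ∃ K : ℝ, 0 ≤ K ∧ ∀ d : ℕ, (d : ℝ) ^ a ≤ (1 + η) * d.descFactorial a + K := by
  obtain ⟨D, hD⟩ := eventually_atTop.mp ((isEquivalent_descFactorial a).symm.isLittleO.bound hη)
  refine ⟨(D : ℝ) ^ a, by positivity, fun d => ?_⟩
  have hdesc : (0 : ℝ) ≤ d.descFactorial a := Nat.cast_nonneg _
  rcases le_or_gt D d with hd | hd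
  · have h := hD d hd
    rw [Pi.sub_apply, Real.norm_eq_abs, Real.norm_eq_abs, abs_of_nonneg hdesc] at h
    linarith [(abs_le.mp h).2, pow_nonneg (Nat.cast_nonneg D : (0 : ℝ) ≤ D) a]
  · have : (d : ℝ) ^ a ≤ (D : ℝ) ^ a := pow_le_pow_left₀ (by positivity) (by exact_mod_cast hd.le) a
    linarith [mul_nonneg (by linarith : (0 : ℝ) ≤ 1 + η) hdesc]

theorem exists_mul_le_mul_rpow_add (D : ℝ) {δ c : ℝ} (hδ : 0 < δ) (hc : 1 < c) :
    ∃ C : ℝ, ∀ x : ℝ, 0 ≤ x → D * x ≤ δ * x ^ c + C := by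
  have h : Tendsto (fun x : ℝ => δ * x ^ (c - 1)) atTop atTop :=
    (tendsto_rpow_atTop (by linarith)).const_mul_atTop hδ
  obtain ⟨x₀, hx₀⟩ := eventually_atTop.mp (h.eventually_ge_atTop D)
  refine ⟨|D| * max x₀ 0, fun x hx => ?_⟩
  have hxc : 0 ≤ δ * x ^ c := by positivity
  rcases le_or_gt x₀ x with h₀ | h₀
  · have hsplit : x ^ c = x ^ (c - 1) * x := by
      rw [← Real.rpow_add_one' hx (by linarith), sub_add_cancel]
    have := mul_le_mul_of_nonneg_right (hx₀ x h₀) hx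
    have : 0 ≤ |D| * max x₀ 0 := by positivity
    rw [hsplit]
    linarith
  · have : D * x ≤ |D| * max x₀ 0 :=
      calc D * x ≤ |D| * x := mul_le_mul_of_nonneg_right (le_abs_self D) hx
        _ ≤ |D| * max x₀ 0 := by gcongr; exact h₀.le.trans (le_max_left _ _)
    linarith

theorem sum_rpow_le_of_sum_pow_le {ι : Type*} (s : Finset ι) {f : ι → ℝ} (hf : ∀ i, 0 ≤ f i)
    {p : ℝ} {A : ℕ} (hp : 0 < p) (hpA : p ≤ A) {L K : ℝ} (hL : 0 ≤ L) (hK : 0 ≤ K)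
    (h : ∑ i ∈ s, f i ^ A ≤ L * #s ^ A + K * #s) :
    ∑ i ∈ s, f i ^ p ≤ L ^ (p / A) * (#s : ℝ) ^ (1 - p / A + p) + K ^ (p / A) * #s := by
  have hA : (0 : ℝ) < A := hp.trans_le hpA
  set θ := p / A
  have hθ0 : 0 ≤ θ := by positivity
  have hθ1 : θ ≤ 1 := (div_le_one hA).mpr hpA
  have hm : (0 : ℝ) ≤ #s := Nat.cast_nonneg _
  have hholder := Real.inner_le_weight_mul_Lp_of_nonneg s ((one_le_div hp).mpr hpA) (fun _ => 1)
    (fun i => f i ^ p) (fun _ => zero_le_one) (fun i => Real.rpow_nonneg (hf i) p)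
  have hpow : ∀ i, (f i ^ p) ^ ((A : ℝ) / p) = f i ^ A := fun i => by
    rw [← Real.rpow_mul (hf i), mul_div_cancel₀ _ hp.ne', Real.rpow_natCast]
  simp only [one_mul, sum_const, nsmul_one, hpow, inv_div] at hholder
  have hsub : (∑ i ∈ s, f i ^ A) ^ θ ≤ L ^ θ * (#s : ℝ) ^ p + K ^ θ * (#s : ℝ) ^ θ := by
    calc (∑ i ∈ s, f i ^ A) ^ θ ≤ (L * #s ^ A + K * #s) ^ θ :=
          Real.rpow_le_rpow (sum_nonneg fun i _ => pow_nonneg (hf i) A) h hθ0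
      _ ≤ (L * #s ^ A) ^ θ + (K * #s) ^ θ :=
          Real.rpow_add_le_add_rpow (by positivity) (by positivity) hθ0 hθ1
      _ = L ^ θ * (#s : ℝ) ^ p + K ^ θ * (#s : ℝ) ^ θ := by
          rw [Real.mul_rpow hL (by positivity), Real.mul_rpow hK hm, ← Real.rpow_natCast,
            ← Real.rpow_mul hm, mul_div_cancel₀ _ hA.ne']
  calc ∑ i ∈ s, f i ^ p ≤ (#s : ℝ) ^ (1 - θ) * (∑ i ∈ s, f i ^ A) ^ θ := hholder
    _ ≤ (#s : ℝ) ^ (1 - θ) * (L ^ θ * (#s : ℝ) ^ p + K ^ θ * (#s : ℝ) ^ θ) := by gcongr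
    _ = L ^ θ * ((#s : ℝ) ^ (1 - θ) * (#s : ℝ) ^ p) +
          K ^ θ * ((#s : ℝ) ^ (1 - θ) * (#s : ℝ) ^ θ) := by ring
    _ = L ^ θ * (#s : ℝ) ^ (1 - θ + p) + K ^ θ * #s := by
        rw [← Real.rpow_add' hm (by linarith), ← Real.rpow_add' hm (by linarith), sub_add_cancel,
          Real.rpow_one]

theorem eventually_mul_rpow_add_le {A A' p q : ℝ} (B C t : ℝ) (hA : A < A') (hp : 0 < p)
    (hqp : q < p) : ∀ᶠ x : ℝ in atTop, A * x ^ p + B * x ^ q + C ≤ A' * (x - t) ^ p := by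
  have hlhs : Tendsto (fun x : ℝ => A + B * x ^ (-(p - q)) + C * x ^ (-p)) atTop (𝓝 A) := by
    have h := (((tendsto_rpow_neg_atTop (sub_pos.mpr hqp)).const_mul B).add
      ((tendsto_rpow_neg_atTop hp).const_mul C)).const_add A
    simpa [add_assoc] using h
  have hrhs : Tendsto (fun x : ℝ => A' * (1 - t / x) ^ p) atTop (𝓝 A') := by
    have h : Tendsto (fun x : ℝ => 1 - t / x) atTop (𝓝 1) := by
      simpa using tendsto_const_nhds.sub
        ((tendsto_const_nhds (x := t)).div_atTop (tendsto_id (α := ℝ)))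
    simpa using (h.rpow_const (.inr hp.le)).const_mul A'
  filter_upwards [hlhs.eventually_lt hrhs hA, eventually_gt_atTop (max t 0)] with x hlt hx
  have hx0 : 0 < x := (le_max_right t 0).trans_lt hx
  have hxt : 0 ≤ 1 - t / x := by
    rw [sub_nonneg, div_le_one hx0]
    exact (le_max_left t 0).trans hx.le
  calc A * x ^ p + B * x ^ q + C
      = (A + B * x ^ (-(p - q)) + C * x ^ (-p)) * x ^ p := by
        rw [add_mul, add_mul, mul_assoc, mul_assoc, ← Real.rpow_add hx0, ← Real.rpow_add hx0,
          neg_add_cancel, Real.rpow_zero, neg_sub, sub_add_cancel, mul_one]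
    _ ≤ A' * (1 - t / x) ^ p * x ^ p := by gcongr
    _ = A' * (x - t) ^ p := by
        rw [mul_assoc, ← Real.mul_rpow hxt hx0.le, sub_mul, div_mul_cancel₀ _ hx0.ne', one_mul]

namespace SimpleGraph

variable {V : Type*} (G : SimpleGraph V)

noncomputable def neighborsIn (X : Finset V) (v : V) : Finset V := {u ∈ X | G.Adj v u}

noncomputable def cliqueCountIn (s : ℕ) (X : Finset V) : ℕ := #{S ∈ X.powerset | G.IsNClique s S}

def BicliqueFreeOn (a b : ℕ) (X : Finset V) : Prop :=
  ∀ A ⊆ X, ∀ B ⊆ X, #A = a → #B = b → ¬ G.IsCompleteBetween A B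

variable {G}

@[simp]
lemma mem_neighborsIn {X : Finset V} {u v : V} : u ∈ G.neighborsIn X v ↔ u ∈ X ∧ G.Adj v u :=
  mem_filter

lemma cliqueCountIn_zero (X : Finset V) : G.cliqueCountIn 0 X = 1 := by
  simp [cliqueCountIn, isNClique_zero, filter_eq']

lemma cliqueCountIn_one (X : Finset V) : G.cliqueCountIn 1 X = #X := by
  calc G.cliqueCountIn 1 X = #(X.map ⟨_, singleton_injective⟩) :=
        congrArg card (by ext S; simp [isNClique_one, eq_comm]; grind)
    _ = #X := card_map _

lemma card_cliques_mem_eq_cliqueCountIn_neighborsIn {X : Finset V} {v : V} (hv : v ∈ X)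
    (s : ℕ) : #{S ∈ X.powerset | G.IsNClique (s + 1) S ∧ v ∈ S} =
      G.cliqueCountIn s (G.neighborsIn X v) := by
  refine card_nbij' (·.erase v) (insert v) ?_ ?_ ?_ ?_
  · intro S hS
    simp only [coe_filter, mem_powerset, Set.mem_ofPred] at hS ⊢
    obtain ⟨hSX, hS, hvS⟩ := hS
    refine ⟨fun u hu => ?_, hS.erase_of_mem hvS⟩
    obtain ⟨huv, hu⟩ := mem_erase.mp hu
    exact mem_filter.mpr ⟨hSX hu, hS.1 hvS hu (Ne.symm huv)⟩
  · intro S hS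
    simp only [coe_filter, mem_powerset, Set.mem_ofPred, neighborsIn, subset_iff,
      mem_filter] at hS ⊢
    refine ⟨?_, hS.2.insert fun u hu => (hS.1 hu).2, mem_insert_self v S⟩
    simpa [hv] using fun u hu => (hS.1 hu).1
  · intro S hS
    exact insert_erase (mem_filter.mp hS).2.2
  · intro S hS
    simp only [coe_filter, mem_powerset, Set.mem_ofPred] at hS
    exact erase_insert fun h => G.irrefl (mem_filter.mp (hS.1 h)).2

theorem succ_mul_cliqueCountIn_succ (s : ℕ) (X : Finset V) :
    (s + 1) * G.cliqueCountIn (s + 1) X = ∑ v ∈ X, G.cliqueCountIn s (G.neighborsIn X v) := by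
  set 𝒮 := {S ∈ X.powerset | G.IsNClique (s + 1) S}
  calc (s + 1) * G.cliqueCountIn (s + 1) X = ∑ S ∈ 𝒮, #{v ∈ X | v ∈ S} := by
        rw [cliqueCountIn, mul_comm, ← smul_eq_mul, ← sum_const]
        refine sum_congr rfl fun S hS => ?_
        obtain ⟨hSX, hS⟩ := mem_filter.mp hS
        rw [filter_mem_eq_inter, inter_eq_right.mpr (mem_powerset.mp hSX), hS.card_eq]
    _ = ∑ v ∈ X, #{S ∈ 𝒮 | v ∈ S} := by
        simp_rw [card_filter]
        exact sum_comm
    _ = ∑ v ∈ X, G.cliqueCountIn s (G.neighborsIn X v) := by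
        refine sum_congr rfl fun v hv => ?_
        rw [← card_cliques_mem_eq_cliqueCountIn_neighborsIn hv, filter_filter]

namespace BicliqueFreeOn

variable {a b : ℕ} {X : Finset V}

theorem neighborsIn (h : G.BicliqueFreeOn (a + 1) b X) {v : V} (hv : v ∈ X) :
    G.BicliqueFreeOn a b (G.neighborsIn X v) := by
  intro A hA B hB hcA hcB hAB
  have hN : ∀ {u}, u ∈ G.neighborsIn X v → u ∈ X ∧ G.Adj v u := mem_neighborsIn.mp
  have hvA : v ∉ A := fun hvA => G.irrefl (hN (hA hvA)).2
  refine h (insert v A) (insert_subset hv fun u hu => (hN (hA hu)).1) B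
    (fun u hu => (hN (hB hu)).1) (by rw [card_insert_of_notMem hvA, hcA]) hcB ?_
  intro u hu w hw
  rcases mem_insert.mp hu with rfl | hu
  · exact (hN (hB hw)).2
  · exact hAB hu hw

theorem sum_choose_card_neighborsIn_le (h : G.BicliqueFreeOn a b X) :
    ∑ v ∈ X, (#(G.neighborsIn X v)).choose a ≤ (b - 1) * (#X).choose a := by
  let R : V → Finset V → Prop := fun v A => ∀ u ∈ A, G.Adj v u
  have hcommon : ∀ A ∈ X.powersetCard a, #(X.bipartiteBelow R A) ≤ b - 1 := by
    intro A hA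
    obtain ⟨hAX, hcA⟩ := mem_powersetCard.mp hA
    by_contra! hlt
    obtain ⟨B, hB, hcB⟩ := exists_subset_card_eq (show b ≤ #(X.bipartiteBelow R A) by omega)
    refine h A hAX B (hB.trans (filter_subset _ _)) hcA hcB fun u hu w hw => ?_
    exact ((mem_filter.mp (hB hw)).2 u hu).symm
  calc ∑ v ∈ X, (#(G.neighborsIn X v)).choose a
      = ∑ v ∈ X, #((X.powersetCard a).bipartiteAbove R v) := by
        refine sum_congr rfl fun v _ => ?_
        rw [← card_powersetCard]
        congr 1
        ext A
        simp only [R, mem_powersetCard, bipartiteAbove, mem_filter, subset_iff, mem_neighborsIn]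
        grind
    _ = ∑ A ∈ X.powersetCard a, #(X.bipartiteBelow R A) :=
        sum_card_bipartiteAbove_eq_sum_card_bipartiteBelow R
    _ ≤ #(X.powersetCard a) * (b - 1) := sum_le_card_nsmul _ _ _ hcommon
    _ = (b - 1) * (#X).choose a := by rw [card_powersetCard, mul_comm]

theorem sum_pow_card_neighborsIn_le (h : G.BicliqueFreeOn a b X) (hb : 1 ≤ b) {η K : ℝ}
    (hη : 0 ≤ 1 + η) (hK : ∀ d : ℕ, (d : ℝ) ^ a ≤ (1 + η) * d.descFactorial a + K) :
    ∑ v ∈ X, (#(G.neighborsIn X v) : ℝ) ^ a ≤ (1 + η) * (b - 1) * #X ^ a + K * #X := by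
  have hdesc : ∑ v ∈ X, (#(G.neighborsIn X v)).descFactorial a ≤ (b - 1) * #X ^ a :=
    calc ∑ v ∈ X, (#(G.neighborsIn X v)).descFactorial a
        = a.factorial * ∑ v ∈ X, (#(G.neighborsIn X v)).choose a := by
          simp_rw [Nat.descFactorial_eq_factorial_mul_choose, mul_sum]
      _ ≤ a.factorial * ((b - 1) * (#X).choose a) :=
          Nat.mul_le_mul_left _ h.sum_choose_card_neighborsIn_le
      _ = (b - 1) * (#X).descFactorial a := by
          rw [Nat.descFactorial_eq_factorial_mul_choose]; ring
      _ ≤ (b - 1) * #X ^ a := Nat.mul_le_mul_left _ (Nat.descFactorial_le_pow _ _)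
  have hdescR : ∑ v ∈ X, ((#(G.neighborsIn X v)).descFactorial a : ℝ) ≤ (b - 1) * #X ^ a := by
    have := Nat.cast_le (α := ℝ) |>.mpr hdesc
    push_cast [Nat.cast_sub hb] at this
    exact this
  calc ∑ v ∈ X, (#(G.neighborsIn X v) : ℝ) ^ a
      ≤ ∑ v ∈ X, ((1 + η) * (#(G.neighborsIn X v)).descFactorial a + K) :=
        sum_le_sum fun v _ => hK _
    _ = (1 + η) * ∑ v ∈ X, ((#(G.neighborsIn X v)).descFactorial a : ℝ) + K * #X := by
        rw [sum_add_distrib, ← mul_sum, sum_const, nsmul_eq_mul, mul_comm K]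
    _ ≤ (1 + η) * ((b - 1) * #X ^ a) + K * #X := by gcongr
    _ = (1 + η) * (b - 1) * #X ^ a + K * #X := by ring

end BicliqueFreeOn

theorem exists_copy_of_not_bicliqueFreeOn {a b : ℕ} {X : Finset V}
    (h : ¬ G.BicliqueFreeOn a b X) :
    ∃ f : completeBipartiteGraph (Fin a) (Fin b) →g G, Function.Injective f ∧ ∀ x, f x ∈ X := by
  simp only [BicliqueFreeOn, not_forall, not_not, exists_prop] at h
  obtain ⟨A, hA, B, hB, hcA, hcB, hAB⟩ := h
  let eA := (A.equivFinOfCardEq hcA).symm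
  let eB := (B.equivFinOfCardEq hcB).symm
  have hadj : ∀ i j, G.Adj (eA i) (eB j) := fun i j => hAB (eA i).2 (eB j).2
  let f : Fin a ⊕ Fin b → V := Sum.elim (fun i => eA i) (fun j => eB j)
  refine ⟨⟨f, ?_⟩, (?_ : Function.Injective f), ?_⟩
  · rintro (i | i) (j | j) hij
    · simp at hij
    · exact hadj i j
    · exact (hadj j i).symm
    · simp at hij
  · rintro (i | i) (j | j) hij <;> simp only [f, Sum.elim_inl, Sum.elim_inr] at hij
    · rw [eA.injective (Subtype.ext hij)]
    · exact absurd (hij ▸ hadj i j) G.irrefl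
    · exact absurd (hij ▸ hadj j i) G.irrefl
    · rw [eB.injective (Subtype.ext hij)]
  · rintro (i | j)
    exacts [hA (eA i).2, hB (eB j).2]

theorem containsCopy_multiCopies_succ {α : Type*} {H : SimpleGraph α} {m : ℕ}
    (f : multiCopies m H →g G) (hf : Function.Injective f) (g : H →g G)
    (hg : Function.Injective g) (hfg : ∀ x y, f x ≠ g y) :
    (multiCopies (m + 1) H).ContainsCopy G := by
  let ψ : Fin (m + 1) × α → V := fun p => Fin.lastCases (g p.2) (fun i => f (i, p.2)) p.1
  refine ⟨⟨ψ, ?_⟩, (?_ : Function.Injective ψ)⟩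
  · rintro ⟨i, x⟩ ⟨j, y⟩ ⟨rfl, hxy⟩
    induction i using Fin.lastCases with
    | last => simpa [ψ] using g.map_adj hxy
    | cast i =>
      simpa [ψ] using f.map_adj (show (multiCopies m H).Adj (i, x) (i, y) from ⟨rfl, hxy⟩)
  · rintro ⟨i, x⟩ ⟨j, y⟩ h
    induction i using Fin.lastCases <;> induction j using Fin.lastCases <;>
      simp only [ψ, Fin.lastCases_last, Fin.lastCases_castSucc] at h
    · rw [hg h]
    · exact absurd h.symm (hfg _ _)
    · exact absurd h (hfg _ _)
    · obtain ⟨h₁, h₂⟩ := Prod.ext_iff.mp (hf h)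
      simp only at h₁ h₂
      rw [h₁, h₂]

variable [Fintype V]

theorem bicliqueFreeOn_compl_or_containsCopy_succ {a b m : ℕ}
    (h : (multiCopies m (completeBipartiteGraph (Fin a) (Fin b))).ContainsCopy G) :
    (∃ W : Finset V, #W ≤ m * (a + b) ∧ G.BicliqueFreeOn a b Wᶜ) ∨
      (multiCopies (m + 1) (completeBipartiteGraph (Fin a) (Fin b))).ContainsCopy G := by
  obtain ⟨f, hf⟩ := h
  by_cases hW : G.BicliqueFreeOn a b (univ.image f)ᶜ
  · refine .inl ⟨_, card_image_le.trans ?_, hW⟩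
    simp
  · obtain ⟨g, hg, hgW⟩ := exists_copy_of_not_bicliqueFreeOn hW
    refine .inr (containsCopy_multiCopies_succ f hf g hg fun x y hxy => ?_)
    simpa [← hxy] using hgW y

theorem exists_bicliqueFreeOn_compl_or_containsCopy (a b m : ℕ) :
    (∃ W : Finset V, #W ≤ m * (a + b) ∧ G.BicliqueFreeOn a b Wᶜ) ∨
      (multiCopies (m + 1) (completeBipartiteGraph (Fin a) (Fin b))).ContainsCopy G := by
  induction m with
  | zero =>
    exact bicliqueFreeOn_compl_or_containsCopy_succ
      ⟨⟨fun x => x.1.elim0, fun {x} => x.1.elim0⟩, fun x => x.1.elim0⟩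
  | succ m ih =>
    rcases ih with ⟨W, hW, hfree⟩ | h
    · exact .inl ⟨W, hW.trans (Nat.mul_le_mul_right _ m.le_succ), hfree⟩
    · exact bicliqueFreeOn_compl_or_containsCopy_succ h

theorem cliqueCount_eq_cliqueCountIn_univ (r : ℕ) : cliqueCount G r = G.cliqueCountIn r univ := by
  rw [cliqueCount, Nat.card_eq_fintype_card, Fintype.card_subtype, cliqueCountIn, powerset_univ]

theorem cliqueCountIn_univ_le_sum_choose_mul (r : ℕ) (W : Finset V) :
    G.cliqueCountIn r univ ≤ ∑ j ∈ range (r + 1), (#W).choose j * G.cliqueCountIn (r - j) Wᶜ := by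
  let T := (range (r + 1)).sigma fun j =>
    W.powersetCard j ×ˢ {S ∈ Wᶜ.powerset | G.IsNClique (r - j) S}
  calc G.cliqueCountIn r univ ≤ #T := by
        refine card_le_card_of_injOn (fun S => ⟨#(S ∩ W), (S ∩ W, S \ W)⟩) ?_ ?_
        · intro S hS
          simp only [coe_filter, mem_powerset, Set.mem_ofPred, subset_univ, true_and] at hS
          have hcard := card_sdiff_add_card_inter S W
          have hle : #(S ∩ W) ≤ r := hS.card_eq ▸ card_le_card inter_subset_left
          simp only [T, coe_sigma, Set.mem_sigma_iff, mem_coe, mem_range, mem_product,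
            mem_powersetCard, mem_filter, mem_powerset]
          refine ⟨by omega, ⟨inter_subset_right, trivial⟩, fun x hx => ?_, ?_⟩
          · simpa using (mem_sdiff.mp hx).2
          · exact ⟨hS.1.subset (by simp), by rw [← hS.card_eq]; omega⟩
        · intro S _ S' _ h
          simp only [Sigma.mk.injEq, Prod.mk.injEq, heq_eq_eq] at h
          rw [← sdiff_union_inter S W, ← sdiff_union_inter S' W, h.2.1, h.2.2]
    _ = ∑ j ∈ range (r + 1), (#W).choose j * G.cliqueCountIn (r - j) Wᶜ := by
        simp [T, card_sigma, card_product, card_powersetCard, cliqueCountIn]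

end SimpleGraph


noncomputable def cliqueGamma (a s : ℕ) : ℝ := s * (s - 1) / (2 * a)

lemma cliqueGamma_nonneg (a s : ℕ) : 0 ≤ cliqueGamma a s := by
  rcases s with _ | s
  · simp [cliqueGamma]
  · unfold cliqueGamma
    push_cast
    rw [add_sub_cancel_right]
    positivity

@[simp]
lemma cliqueGamma_zero_right (a : ℕ) : cliqueGamma a 0 = 0 := by
  simp [cliqueGamma]

lemma cliqueGamma_add_div {a : ℕ} (ha : a ≠ 0) (s : ℕ) :
    cliqueGamma a s + (s - cliqueGamma a s) / (a + 1 : ℕ) = cliqueGamma (a + 1) (s + 1) := by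
  have : (a : ℝ) ≠ 0 := by exact_mod_cast ha
  unfold cliqueGamma
  push_cast
  field_simp
  ring

lemma sub_cliqueGamma_sub_sub_cliqueGamma {a : ℕ} (ha : a ≠ 0) (x y : ℕ) :
    ((y : ℝ) - cliqueGamma a y) - ((x : ℝ) - cliqueGamma a x) =
      (y - x) * (2 * a + 1 - x - y) / (2 * a) := by
  have : (a : ℝ) ≠ 0 := by exact_mod_cast ha
  unfold cliqueGamma
  field_simp
  ring

lemma sub_cliqueGamma_le_sub_cliqueGamma {a x y : ℕ} (hxy : x ≤ y) (h : x + y ≤ 2 * a + 1) :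
    (x : ℝ) - cliqueGamma a x ≤ y - cliqueGamma a y := by
  rcases eq_or_ne a 0 with rfl | ha
  · simpa [cliqueGamma] using hxy
  rw [← sub_nonneg, sub_cliqueGamma_sub_sub_cliqueGamma ha]
  have : (x : ℝ) ≤ y := by exact_mod_cast hxy
  have : (x + y : ℝ) ≤ 2 * a + 1 := by exact_mod_cast h
  apply div_nonneg <;> nlinarith

lemma sub_cliqueGamma_nonneg {a s : ℕ} (h : s ≤ 2 * a + 1) : 0 ≤ (s : ℝ) - cliqueGamma a s := by
  simpa using sub_cliqueGamma_le_sub_cliqueGamma (a := a) (x := 0) (Nat.zero_le s) (by omega)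

lemma sub_cliqueGamma_lt_sub_cliqueGamma {a x y : ℕ} (hxy : x < y) (h : x + y ≤ 2 * a) :
    (x : ℝ) - cliqueGamma a x < y - cliqueGamma a y := by
  have ha : a ≠ 0 := by omega
  rw [← sub_pos, sub_cliqueGamma_sub_sub_cliqueGamma ha]
  have : (x : ℝ) < y := by exact_mod_cast hxy
  have : (x + y : ℝ) ≤ 2 * a := by exact_mod_cast h
  have : (0 : ℝ) < a := by positivity
  apply div_pos <;> nlinarith

universe u

def HasCliqueBound (a b s : ℕ) (ε C : ℝ) : Prop :=
  ∀ {V : Type u} (G : SimpleGraph V) (X : Finset V), G.BicliqueFreeOn a b X →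
    (G.cliqueCountIn s X : ℝ) ≤
      (1 / s ! + ε) * ((b : ℝ) - 1) ^ cliqueGamma a s * (#X : ℝ) ^ ((s : ℝ) - cliqueGamma a s) + C

lemma hasCliqueBound_zero {a b : ℕ} {ε : ℝ} (hε : 0 ≤ ε) : HasCliqueBound.{u} a b 0 ε 0 := by
  intro V G X _
  simp [SimpleGraph.cliqueCountIn_zero, cliqueGamma, hε]

lemma hasCliqueBound_one {a b : ℕ} {ε : ℝ} (hε : 0 ≤ ε) : HasCliqueBound.{u} a b 1 ε 0 := by
  intro V G X _
  simp only [SimpleGraph.cliqueCountIn_one, cliqueGamma]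
  norm_num
  nlinarith [(Nat.cast_nonneg #X : (0 : ℝ) ≤ #X)]

theorem HasCliqueBound.exists_succ_mul_le {a b s : ℕ} {ε C : ℝ} (h : HasCliqueBound.{u} a b s ε C)
    (hs : 1 ≤ s) (ha : 2 * s ≤ a + 1) (hb : 2 ≤ b) (hε : 0 ≤ ε) {η : ℝ} (hη : 0 < η) :
    ∃ D : ℝ, ∀ {V : Type u} (G : SimpleGraph V) (X : Finset V), G.BicliqueFreeOn (a + 1) b X →
      (s + 1) * (G.cliqueCountIn (s + 1) X : ℝ) ≤
        (1 / s ! + ε) * (1 + η) * ((b : ℝ) - 1) ^ cliqueGamma (a + 1) (s + 1) *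
          (#X : ℝ) ^ (((s + 1 : ℕ) : ℝ) - cliqueGamma (a + 1) (s + 1)) + D * #X := by
  set γ := cliqueGamma a s
  set α : ℝ := s - γ
  set θ : ℝ := α / (a + 1 : ℕ)
  have hα : 0 < α := sub_pos.mpr <| by
    simpa using sub_cliqueGamma_lt_sub_cliqueGamma (a := a) (x := 0) (y := s) hs (by omega)
  have hαa : α ≤ (a + 1 : ℕ) := by
    have : (s : ℝ) ≤ (a + 1 : ℕ) := by exact_mod_cast (show s ≤ a + 1 by omega)
    linarith [cliqueGamma_nonneg a s]
  have hθ1 : θ ≤ 1 := (div_le_one (by positivity)).mpr hαa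
  have hγ : γ + θ = cliqueGamma (a + 1) (s + 1) := cliqueGamma_add_div (by omega) s
  have hexp : ((s + 1 : ℕ) : ℝ) - cliqueGamma (a + 1) (s + 1) = 1 - θ + α := by
    push_cast
    linarith
  have hb1 : (0 : ℝ) < b - 1 := by
    rw [sub_pos]
    exact_mod_cast hb
  obtain ⟨K, hK0, hK⟩ := exists_pow_le_descFactorial_add (a + 1) hη
  set P : ℝ := 1 / s ! + ε
  refine ⟨P * ((b : ℝ) - 1) ^ γ * K ^ θ + C, fun G X hX => ?_⟩
  rw [hexp]
  set m : ℝ := (#X : ℝ)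
  have hsum : ∑ v ∈ X, (#(G.neighborsIn X v) : ℝ) ^ α ≤
      ((1 + η) * (b - 1)) ^ θ * m ^ (1 - θ + α) + K ^ θ * m :=
    sum_rpow_le_of_sum_pow_le X (fun _ => Nat.cast_nonneg _) hα hαa (by positivity) hK0
      (hX.sum_pow_card_neighborsIn_le (by omega) (by linarith) hK)
  have hβ :
      ((b : ℝ) - 1) ^ γ * ((b : ℝ) - 1) ^ θ = ((b : ℝ) - 1) ^ cliqueGamma (a + 1) (s + 1) := by
    rw [← Real.rpow_add hb1, hγ]
  calc (s + 1) * (G.cliqueCountIn (s + 1) X : ℝ)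
      = ∑ v ∈ X, (G.cliqueCountIn s (G.neighborsIn X v) : ℝ) := by
        exact_mod_cast SimpleGraph.succ_mul_cliqueCountIn_succ s X
    _ ≤ ∑ v ∈ X, (P * ((b : ℝ) - 1) ^ γ * (#(G.neighborsIn X v) : ℝ) ^ α + C) :=
        sum_le_sum fun v hv => h G _ (hX.neighborsIn hv)
    _ = P * ((b : ℝ) - 1) ^ γ * ∑ v ∈ X, (#(G.neighborsIn X v) : ℝ) ^ α + C * m := by
        rw [sum_add_distrib, ← mul_sum, sum_const, nsmul_eq_mul, mul_comm C]
    _ ≤ P * ((b : ℝ) - 1) ^ γ * (((1 + η) * (b - 1)) ^ θ * m ^ (1 - θ + α) + K ^ θ * m) +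
          C * m := by gcongr
    _ = P * (1 + η) ^ θ * ((b : ℝ) - 1) ^ cliqueGamma (a + 1) (s + 1) * m ^ (1 - θ + α) +
          (P * ((b : ℝ) - 1) ^ γ * K ^ θ + C) * m := by
        rw [Real.mul_rpow (by linarith) hb1.le, ← hβ]
        ring
    _ ≤ P * (1 + η) * ((b : ℝ) - 1) ^ cliqueGamma (a + 1) (s + 1) * m ^ (1 - θ + α) +
          (P * ((b : ℝ) - 1) ^ γ * K ^ θ + C) * m := by
        gcongr
        exact Real.rpow_le_self_of_one_le (by linarith) hθ1

theorem HasCliqueBound.succ {a b s : ℕ} (hs : 1 ≤ s) (ha : 2 * s ≤ a + 1) (hb : 2 ≤ b)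
    (ih : ∀ ε > 0, ∃ C, HasCliqueBound.{u} a b s ε C) {ε : ℝ} (hε : 0 < ε) :
    ∃ C, HasCliqueBound.{u} (a + 1) b (s + 1) ε C := by
  -- `(1 / s! + δ) * (1 + δ) ≤ 1 / s! + 3 * δ ≤ 1 / s! + ε / 2`
  set δ : ℝ := min 1 (ε / 6)
  have hδ : 0 < δ := lt_min one_pos (by positivity)
  obtain ⟨C₁, hC₁⟩ := ih δ hδ
  obtain ⟨D, hD⟩ := hC₁.exists_succ_mul_le hs ha hb hδ.le hδ
  set β : ℝ := ((b : ℝ) - 1) ^ cliqueGamma (a + 1) (s + 1)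
  have hc : 1 < ((s + 1 : ℕ) : ℝ) - cliqueGamma (a + 1) (s + 1) := by
    simpa [cliqueGamma] using
      sub_cliqueGamma_lt_sub_cliqueGamma (a := a + 1) (x := 1) (y := s + 1) (by omega) (by omega)
  set c : ℝ := ((s + 1 : ℕ) : ℝ) - cliqueGamma (a + 1) (s + 1)
  have hβ : 0 < β := Real.rpow_pos_of_pos (by rw [sub_pos]; exact_mod_cast hb) _
  obtain ⟨C₂, hC₂⟩ := exists_mul_le_mul_rpow_add D (δ := (s + 1) * (ε / 2) * β) (by positivity) hc
  refine ⟨C₂ / (s + 1), fun G X hX => ?_⟩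
  have hconst : (1 / s ! + δ) * (1 + δ) + (s + 1) * (ε / 2) ≤ (s + 1) * (1 / (s + 1 : ℕ)! + ε) := by
    have hf1 : 1 / (s ! : ℝ) ≤ 1 :=
      div_le_one_of_le₀ (by exact_mod_cast Nat.one_le_iff_ne_zero.mpr (Nat.factorial_ne_zero s))
        (Nat.cast_nonneg _)
    have hfac : (s + 1 : ℝ) * (1 / ((s + 1 : ℕ)! : ℝ)) = 1 / s ! := by
      rw [Nat.factorial_succ]
      push_cast
      field_simp
    have hδ1 : δ * δ ≤ δ := mul_le_of_le_one_left hδ.le (min_le_left _ _)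
    have hδf : δ * (1 / s !) ≤ δ := mul_le_of_le_one_right hδ.le hf1
    have hδε : δ ≤ ε / 6 := min_le_right _ _
    have hsε : 0 ≤ (s : ℝ) * ε := by positivity
    linear_combination hδ1 + hδf + 3 * hδε + hsε / 2 - hfac
  have hs1 : (0 : ℝ) < s + 1 := by positivity
  have h₁ := hD G X hX
  have h₂ := hC₂ #X (Nat.cast_nonneg _)
  have h₃ := mul_le_mul_of_nonneg_right hconst (by positivity : 0 ≤ β * (#X : ℝ) ^ c)
  rw [← mul_le_mul_iff_of_pos_left hs1, mul_add, mul_div_cancel₀ _ hs1.ne']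
  linarith

theorem exists_hasCliqueBound {a b s : ℕ} (ha : 2 * (s - 1) ≤ a) (hb : 2 ≤ b) {ε : ℝ}
    (hε : 0 < ε) : ∃ C, HasCliqueBound.{u} a b s ε C := by
  induction s generalizing a ε with
  | zero => exact ⟨0, hasCliqueBound_zero hε.le⟩
  | succ s ih =>
    rcases Nat.eq_zero_or_pos s with rfl | hs
    · exact ⟨0, hasCliqueBound_one hε.le⟩
    · obtain ⟨a, rfl⟩ : ∃ a', a = a' + 1 := ⟨a - 1, by omega⟩
      exact HasCliqueBound.succ hs (by omega) hb (fun δ hδ => ih (by omega) hδ) hε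

theorem HasCliqueBound.cliqueCountIn_le_rpow {a b s : ℕ} {ε C : ℝ}
    (h : HasCliqueBound.{u} a b s ε C)
    (hb : 1 ≤ b) (hε : 0 ≤ ε) {V : Type u} {G : SimpleGraph V} {X : Finset V}
    (hX : G.BicliqueFreeOn a b X) {x e : ℝ} (hx : 1 ≤ x) (hXx : #X ≤ x)
    (hs : 0 ≤ (s : ℝ) - cliqueGamma a s) (hse : (s : ℝ) - cliqueGamma a s ≤ e) :
    (G.cliqueCountIn s X : ℝ) ≤ (1 / s ! + ε) * ((b : ℝ) - 1) ^ cliqueGamma a s * x ^ e + C := by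
  have hb1 : (0 : ℝ) ≤ b - 1 := by
    rw [sub_nonneg]
    exact_mod_cast hb
  refine (h G X hX).trans ?_
  have : (#X : ℝ) ^ ((s : ℝ) - cliqueGamma a s) ≤ x ^ e :=
    (Real.rpow_le_rpow (Nat.cast_nonneg _) hXx hs).trans (Real.rpow_le_rpow_of_exponent_le hx hse)
  have : 0 ≤ ((b : ℝ) - 1) ^ cliqueGamma a s := Real.rpow_nonneg hb1 _
  gcongr

theorem exists_cliqueCount_le {a b r w : ℕ} (ha : 2 * (r - 1) ≤ a) (hb : 2 ≤ b)
    {ε : ℝ} (hε : 0 < ε) :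
    ∃ K₁ K₂ : ℝ, ∀ {V : Type u} [Fintype V] (G : SimpleGraph V) (W : Finset V), #W ≤ w →
      G.BicliqueFreeOn a b Wᶜ → 1 ≤ Fintype.card V →
      (cliqueCount G r : ℝ) ≤ (1 / r ! + ε) * ((b : ℝ) - 1) ^ cliqueGamma a r *
          (Fintype.card V : ℝ) ^ ((r : ℝ) - cliqueGamma a r) +
        K₁ * (Fintype.card V : ℝ) ^ (((r - 1 : ℕ) : ℝ) - cliqueGamma a (r - 1)) + K₂ := by
  have : ∀ s, ∃ C, s ≤ r → HasCliqueBound.{u} a b s ε C := fun s =>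
    if hs : s ≤ r then (exists_hasCliqueBound (by omega) hb hε).imp fun _ h _ => h
    else ⟨0, fun h => absurd h hs⟩
  choose C hC using this
  let Q : ℕ → ℝ := fun s => (1 / s ! + ε) * ((b : ℝ) - 1) ^ cliqueGamma a s
  refine ⟨∑ j ∈ range r, (w.choose (j + 1) : ℝ) * Q (r - (j + 1)),
    C r + ∑ j ∈ range r, (w.choose (j + 1) : ℝ) * C (r - (j + 1)), ?_⟩
  intro V _ G W hW hfree hV
  have hn : (1 : ℝ) ≤ Fintype.card V := by exact_mod_cast hV
  have hWc : (#Wᶜ : ℝ) ≤ Fintype.card V := by exact_mod_cast card_le_univ _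
  set n : ℝ := (Fintype.card V : ℝ)
  have hsplit := G.cliqueCountIn_univ_le_sum_choose_mul r W
  rw [sum_range_succ', Nat.choose_zero_right, one_mul, Nat.sub_zero] at hsplit
  rw [SimpleGraph.cliqueCount_eq_cliqueCountIn_univ]
  calc (G.cliqueCountIn r univ : ℝ)
      ≤ G.cliqueCountIn r Wᶜ + ∑ j ∈ range r,
          ((#W).choose (j + 1) : ℝ) * G.cliqueCountIn (r - (j + 1)) Wᶜ := by
        exact_mod_cast hsplit.trans_eq (add_comm _ _)
    _ ≤ (Q r * n ^ ((r : ℝ) - cliqueGamma a r) + C r) + ∑ j ∈ range r,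
          (w.choose (j + 1) : ℝ) * (Q (r - (j + 1)) *
            n ^ (((r - 1 : ℕ) : ℝ) - cliqueGamma a (r - 1)) + C (r - (j + 1))) := by
        gcongr with j hj
        · exact HasCliqueBound.cliqueCountIn_le_rpow (hC r le_rfl) (by omega) hε.le hfree hn hWc
            (sub_cliqueGamma_nonneg (by omega)) le_rfl
        · exact HasCliqueBound.cliqueCountIn_le_rpow (hC _ (by omega)) (by omega) hε.le hfree hn hWc
            (sub_cliqueGamma_nonneg (by omega))
            (sub_cliqueGamma_le_sub_cliqueGamma (by have := mem_range.mp hj; omega) (by omega))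
    _ = _ := by
        simp only [Q, mul_add, sum_add_distrib, sum_mul, mul_assoc]
        ring

theorem eventually_cliqueCount_le {t r a b : ℕ} (hr : 2 ≤ r) (ha : 2 * (r - 1) ≤ a) (hb : 2 ≤ b)
    {ε : ℝ} (hε : 0 < ε) :
    ∀ᶠ n : ℕ in atTop, ∀ G : SimpleGraph (Fin n),
      (multiCopies (t + 1) (completeBipartiteGraph (Fin a) (Fin b))).FreeIn G →
      (cliqueCount G r : ℝ) ≤
        (1 / r ! + ε) * ((b : ℝ) - 1) ^ cliqueGamma a r *
          ((n : ℝ) - t) ^ ((r : ℝ) - cliqueGamma a r) := by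
  obtain ⟨K₁, K₂, hK⟩ := exists_cliqueCount_le.{0} (w := t * (a + b)) ha hb (half_pos hε)
  have hβ : 0 < ((b : ℝ) - 1) ^ cliqueGamma a r :=
    Real.rpow_pos_of_pos (by rw [sub_pos]; exact_mod_cast hb) _
  have hp : 0 < (r : ℝ) - cliqueGamma a r := by
    simpa using sub_cliqueGamma_lt_sub_cliqueGamma (a := a) (x := 0) (y := r) (by omega) (by omega)
  have hqp : ((r - 1 : ℕ) : ℝ) - cliqueGamma a (r - 1) < (r : ℝ) - cliqueGamma a r :=
    sub_cliqueGamma_lt_sub_cliqueGamma (by omega) (by omega)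
  have hev := eventually_mul_rpow_add_le K₁ K₂ t
    (mul_lt_mul_of_pos_right (by linarith : 1 / (r ! : ℝ) + ε / 2 < 1 / r ! + ε) hβ) hp hqp
  filter_upwards [tendsto_natCast_atTop_atTop.eventually hev, eventually_ge_atTop 1]
    with n hn hn1 G hG
  obtain ⟨W, hW, hfree⟩ := (G.exists_bicliqueFreeOn_compl_or_containsCopy a b t).resolve_right hG
  have := hK G W hW hfree (by simpa using hn1)
  rw [Fintype.card_fin] at this
  exact this.trans (by simpa only [mul_assoc] using hn)

theorem exTuran_le {α : Type*} {n r : ℕ} {F : SimpleGraph α} {R : ℝ} (hR : 0 ≤ R)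
    (h : ∀ G : SimpleGraph (Fin n), F.FreeIn G → (cliqueCount G r : ℝ) ≤ R) :
    (exTuran n r F : ℝ) ≤ R := by
  have : exTuran n r F ≤ ⌊R⌋₊ := csSup_le' <| by
    rintro _ ⟨G, hG, rfl⟩
    exact Nat.le_floor (h G hG)
  exact (Nat.cast_le.mpr this).trans (Nat.floor_le hR)

theorem stmt0_general (t r a b : ℕ) (hr : 3 ≤ r) (ha : 2 * (r - 1) ≤ a)
    (hb : Nat.factorial (a - 1) + 1 ≤ b) (ε : ℝ) (hε : 0 < ε) :
    ∃ N : ℕ, ∀ n : ℕ, N ≤ n →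
      (exTuran n r (multiCopies (t + 1) (completeBipartiteGraph (Fin a) (Fin b))) : ℝ) ≤
        ∑ s ∈ Finset.range (r + 1),
          (Nat.choose t (r - s) : ℝ) * (1 / (Nat.factorial s : ℝ) + ε) *
            ((b : ℝ) - 1) ^ ((s : ℝ) * ((s : ℝ) - 1) / (2 * (a : ℝ))) *
            ((n : ℝ) - (t : ℝ)) ^ ((s : ℝ) - (s : ℝ) * ((s : ℝ) - 1) / (2 * (a : ℝ))) := by
  have hb2 : 2 ≤ b := by have := (a - 1).factorial_pos; omega
  have hb1 : (0 : ℝ) ≤ b - 1 := by rw [sub_nonneg]; exact_mod_cast (by omega : 1 ≤ b)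
  obtain ⟨N, hN⟩ := eventually_atTop.mp
    ((eventually_cliqueCount_le (t := t) (by omega) ha hb2 hε).and (eventually_ge_atTop t))
  refine ⟨N, fun n hn => ?_⟩
  obtain ⟨hG, htn⟩ := hN n hn
  have hnt : (0 : ℝ) ≤ n - t := by rw [sub_nonneg]; exact_mod_cast htn
  have hterm : ∀ s ∈ range (r + 1), 0 ≤ (Nat.choose t (r - s) : ℝ) * (1 / (s ! : ℝ) + ε) *
      ((b : ℝ) - 1) ^ cliqueGamma a s * ((n : ℝ) - t) ^ ((s : ℝ) - cliqueGamma a s) :=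
    fun s _ => by
      have := Real.rpow_nonneg hb1 (cliqueGamma a s)
      have := Real.rpow_nonneg hnt ((s : ℝ) - cliqueGamma a s)
      positivity
  refine (exTuran_le (by simpa using hterm r (self_mem_range_succ r)) hG).trans ?_
  exact Eq.trans_le (by simp) (single_le_sum hterm (self_mem_range_succ r))

/-- upper bound for `ex(n, K_r, (t+1)K_{a,b})`. -/
theorem stmt0 (t r a b : ℕ) (htr : r ≤ t) (hr : 3 ≤ r) (ha : 2 * (r - 1) ≤ a)
    (hb : Nat.factorial (a - 1) + 1 ≤ b) (ε : ℝ) (hε : 0 < ε) :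
    ∃ N : ℕ, ∀ n : ℕ, N ≤ n →
      (exTuran n r (multiCopies (t + 1) (completeBipartiteGraph (Fin a) (Fin b))) : ℝ) ≤
        ∑ s ∈ Finset.range (r + 1),
          (Nat.choose t (r - s) : ℝ) * (1 / (Nat.factorial s : ℝ) + ε) *
            ((b : ℝ) - 1) ^ ((s : ℝ) * ((s : ℝ) - 1) / (2 * (a : ℝ))) *
            ((n : ℝ) - (t : ℝ)) ^ ((s : ℝ) - (s : ℝ) * ((s : ℝ) - 1) / (2 * (a : ℝ))) :=
  stmt0_general t r a b hr ha hb ε hε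
end

section
/- Let t ≥ r ≥ 3 and k ≥ 2 be integers. Then for all n ≥ t + 2k, ex(n, K_r, (t+1)C_{2k}) ≥ C(t, r) + C(t, r-1)·(n-t) + max_{2 ≤ s ≤ r} C(t, r-s)·ex(n-t, K_s, C_{2k}). -/
/-!
Join the complete graph `K_t` with a `C_{2k}`-free graph `H` on `n - t` vertices that has the
maximum number of `s`-cliques. A copy of `C_{2k}` inside `H` is impossible, so every copy of
`C_{2k}` in the join uses a vertex of `K_t`; hence `t + 1` disjoint copies do not fit. An
`r`-clique of the join is an `(r - j)`-subset of `K_t` together with a `j`-clique of `H`, and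
the cliques with `j = 0`, `j = 1` and `j = s` alone give the bound.
-/

open Finset

open SimpleGraph

theorem SimpleGraph.freeIn_iff_free {α β : Type*} {F : SimpleGraph α} {G : SimpleGraph β} :
    F.FreeIn G ↔ F.Free G :=
  not_congr ⟨fun ⟨f, hf⟩ => ⟨f.toCopy hf⟩, fun ⟨f⟩ => ⟨f.toHom, f.injective⟩⟩

theorem SimpleGraph.cycleGraph_ne_bot (n : ℕ) : cycleGraph (n + 2) ≠ ⊥ := fun h => by
  have hadj : (cycleGraph (n + 2)).Adj 1 0 := cycleGraph_adj.2 (Or.inl (sub_zero 1))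
  rw [h] at hadj
  exact hadj

section Join

variable {α β V : Type*}

def multiCopies.component (m : ℕ) (F : SimpleGraph V) (i : Fin m) :
    Copy F (multiCopies m F) :=
  ⟨⟨fun x => (i, x), fun h => ⟨rfl, h⟩⟩, fun _ _ h => (Prod.mk.inj h).2⟩

theorem exists_inl_of_copy_joinG (G : SimpleGraph α) {H : SimpleGraph β} {F : SimpleGraph V}
    (hH : F.Free H) (f : Copy F (joinG G H)) : ∃ x a, f x = Sum.inl a := by
  by_contra! hf
  have hinr : ∀ x, ∃ b, f x = Sum.inr b := fun x => by
    cases hx : f x with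
    | inl a => exact absurd hx (hf x a)
    | inr b => exact ⟨b, rfl⟩
  choose g hg using hinr
  refine hH ⟨⟨g, fun {x y} hxy => ?_⟩, fun x y hxy =>
    f.injective <| (hg x).trans <| (congrArg Sum.inr hxy).trans (hg y).symm⟩
  have hadj := f.toHom.map_adj hxy
  rw [Copy.coe_toHom, hg, hg] at hadj
  exact hadj

theorem multiCopies_free_joinG [Fintype α] (G : SimpleGraph α) {H : SimpleGraph β}
    {F : SimpleGraph V} (hH : F.Free H) :
    (multiCopies (Fintype.card α + 1) F).Free (joinG G H) := by
  rintro ⟨f⟩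
  choose x a hxa using fun i =>
    exists_inl_of_copy_joinG G hH (f.comp (multiCopies.component _ F i))
  have ha : Function.Injective a := fun i j hij =>
    (Prod.mk.inj (f.injective ((hxa i).trans (hij ▸ (hxa j).symm)))).1
  simpa using Fintype.card_le_of_injective a ha

theorem SimpleGraph.isNClique_top_iff {s : Finset α} {a : ℕ} :
    (⊤ : SimpleGraph α).IsNClique a s ↔ #s = a := by
  simp [isNClique_iff]

theorem SimpleGraph.IsNClique.disjSum_joinG {G : SimpleGraph α} {H : SimpleGraph β} {a b : ℕ}
    {s : Finset α} {t : Finset β} (hs : G.IsNClique a s) (ht : H.IsNClique b t) :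
    (joinG G H).IsNClique (a + b) (s.disjSum t) := by
  refine ⟨?_, by rw [card_disjSum, hs.2, ht.2]⟩
  rintro (x | x) hx (y | y) hy hxy
  · exact hs.1 (by simpa using hx) (by simpa using hy) (by simpa using hxy)
  · trivial
  · trivial
  · exact ht.1 (by simpa using hx) (by simpa using hy) (by simpa using hxy)

end Join

section CliqueCount

variable {α β : Type*}

theorem cliqueCount_congr {G : SimpleGraph α} {G' : SimpleGraph β} (e : G ≃g G') (r : ℕ) :
    cliqueCount G r = cliqueCount G' r := by
  refine Nat.card_congr (e.toEquiv.finsetCongr.subtypeEquiv fun s => ?_)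
  simp [isNClique_iff, isClique_iff, Set.Pairwise, Equiv.finsetCongr_apply, e.map_adj_iff]

theorem cliqueCount_zero (G : SimpleGraph α) : cliqueCount G 0 = 1 := by
  simp [cliqueCount, isNClique_zero]

theorem cliqueCount_one (G : SimpleGraph α) : cliqueCount G 1 = Nat.card α :=
  (Nat.card_eq_of_bijective
    (fun a => (⟨{a}, isNClique_one.2 ⟨a, rfl⟩⟩ : {s // G.IsNClique 1 s}))
    ⟨fun a b h => singleton_injective (congrArg Subtype.val h),
      fun ⟨s, hs⟩ => by obtain ⟨a, rfl⟩ := isNClique_one.1 hs; exact ⟨a, rfl⟩⟩).symm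

theorem cliqueCount_eq_card_cliqueFinset [Fintype α] [DecidableEq α] (G : SimpleGraph α)
    [DecidableRel G.Adj] (r : ℕ) : cliqueCount G r = #(G.cliqueFinset r) := by
  simp [cliqueCount, ← mem_cliqueFinset_iff, Nat.card_eq_fintype_card]

/-- An `(r - j)`-set of `α` together with a `j`-clique of `H` is an `r`-clique of `K_α ∨ H`, and
`j` is recovered as the size of the part in `H`. -/
theorem sum_choose_mul_cliqueCount_le_cliqueCount_joinG [Fintype α] [Fintype β]
    (H : SimpleGraph β) {r : ℕ} {J : Finset ℕ} (hJ : ∀ j ∈ J, j ≤ r) :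
    ∑ j ∈ J, (Fintype.card α).choose (r - j) * cliqueCount H j ≤
      cliqueCount (joinG (⊤ : SimpleGraph α) H) r := by
  classical
  simp only [cliqueCount_eq_card_cliqueFinset]
  calc ∑ j ∈ J, (Fintype.card α).choose (r - j) * #(H.cliqueFinset j)
      = #(J.sigma fun j => powersetCard (r - j) univ ×ˢ H.cliqueFinset j) := by
        simp [card_sigma, card_product, card_powersetCard]
    _ ≤ _ := card_le_card_of_injOn (fun p => p.2.1.disjSum p.2.2) ?_ ?_
  · rintro ⟨j, T, U⟩ hp
    simp only [coe_sigma, Set.mem_sigma_iff, mem_coe, mem_product, mem_powersetCard,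
      mem_cliqueFinset_iff] at hp ⊢
    simpa only [Nat.sub_add_cancel (hJ j hp.1)] using
      (isNClique_top_iff.2 hp.2.1.2).disjSum_joinG hp.2.2
  · rintro ⟨j, T, U⟩ hp ⟨j', T', U'⟩ hp' h
    obtain ⟨rfl, rfl⟩ := disjSum_inj.1 h
    simp only [coe_sigma, Set.mem_sigma_iff, mem_coe, mem_product, mem_cliqueFinset_iff] at hp hp'
    obtain rfl : j = j' := hp.2.2.2.symm.trans hp'.2.2.2
    rfl

end CliqueCount

section ExTuran

variable {α V : Type*} {F : SimpleGraph α}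

theorem bddAbove_cliqueCount_freeIn (n r : ℕ) (F : SimpleGraph α) :
    BddAbove {m : ℕ | ∃ G : SimpleGraph (Fin n), F.FreeIn G ∧ m = cliqueCount G r} :=
  ⟨Nat.card (Finset (Fin n)), by rintro _ ⟨G, -, rfl⟩; exact Finite.card_subtype_le _⟩

theorem cliqueCount_le_exTuran [Fintype V] {G : SimpleGraph V} {n : ℕ} (hG : F.FreeIn G)
    (hn : Fintype.card V = n) (r : ℕ) : cliqueCount G r ≤ exTuran n r F := by
  refine le_csSup (bddAbove_cliqueCount_freeIn n r F)
    ⟨G.overFin hn, ?_, cliqueCount_congr (G.overFinIso hn) r⟩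
  rwa [freeIn_iff_free, ← free_congr_right (G.overFinIso hn), ← freeIn_iff_free]

theorem exists_cliqueCount_eq_exTuran (n r : ℕ) (hF : F ≠ ⊥) :
    ∃ G : SimpleGraph (Fin n), F.FreeIn G ∧ cliqueCount G r = exTuran n r F := by
  obtain ⟨G, hG, hc⟩ :=
    Nat.sSup_mem (by exact ⟨_, ⊥, freeIn_iff_free.2 (free_bot hF), rfl⟩)
      (bddAbove_cliqueCount_freeIn n r F)
  exact ⟨G, hG, hc.symm⟩

theorem le_exTuran_multiCopies (t : ℕ) {m : ℕ} {H : SimpleGraph (Fin m)} (hH : F.FreeIn H)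
    {r s : ℕ} (hs : 2 ≤ s) (hsr : s ≤ r) :
    t.choose r + t.choose (r - 1) * m + t.choose (r - s) * cliqueCount H s ≤
      exTuran (t + m) r (multiCopies (t + 1) F) := by
  have hfree := multiCopies_free_joinG (⊤ : SimpleGraph (Fin t)) (freeIn_iff_free.1 hH)
  rw [Fintype.card_fin] at hfree
  have hcount := sum_choose_mul_cliqueCount_le_cliqueCount_joinG (α := Fin t) H (r := r)
    (J := {0, 1, s}) (by simp only [mem_insert, mem_singleton]; omega)
  rw [sum_insert (by simp; omega), sum_insert (by simp; omega), sum_singleton, cliqueCount_zero,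
    cliqueCount_one, Nat.card_fin, Fintype.card_fin, Nat.sub_zero, mul_one, ← add_assoc]
    at hcount
  have hcard : Fintype.card (Fin t ⊕ Fin m) = t + m := by simp
  exact hcount.trans (cliqueCount_le_exTuran (freeIn_iff_free.2 hfree) hcard r)

end ExTuran

theorem stmt4_general (t r k : ℕ) (hr : 3 ≤ r) (hk : 2 ≤ k) :
    ∀ n : ℕ, t + 2 * k ≤ n →
      Nat.choose t r + Nat.choose t (r - 1) * (n - t) +
          (Finset.Icc 2 r).sup (fun s => Nat.choose t (r - s) * exTuran (n - t) s (SimpleGraph.cycleGraph (2 * k)))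
        ≤ exTuran n r (multiCopies (t + 1) (SimpleGraph.cycleGraph (2 * k))) := by
  intro n hn
  obtain ⟨s, hs, hsup⟩ := exists_mem_eq_sup (Icc 2 r) ⟨2, mem_Icc.2 ⟨le_rfl, by omega⟩⟩
    fun s => t.choose (r - s) * exTuran (n - t) s (cycleGraph (2 * k))
  obtain ⟨hs2, hsr⟩ := mem_Icc.1 hs
  have hC : cycleGraph (2 * k) ≠ ⊥ := by
    obtain ⟨j, hj⟩ : ∃ j, 2 * k = j + 2 := ⟨2 * k - 2, by omega⟩
    exact hj ▸ cycleGraph_ne_bot j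
  obtain ⟨H, hH, hHs⟩ := exists_cliqueCount_eq_exTuran (n - t) s hC
  rw [hsup, ← hHs]
  simpa only [Nat.add_sub_cancel' (show t ≤ n by omega)] using
    le_exTuran_multiCopies t hH hs2 hsr

/-- lower bound for `ex(n, K_r, (t+1)C_{2k})`. -/
theorem stmt4 (t r k : ℕ) (htr : r ≤ t) (hr : 3 ≤ r) (hk : 2 ≤ k) :
    ∀ n : ℕ, t + 2 * k ≤ n →
      Nat.choose t r + Nat.choose t (r - 1) * (n - t) +
          (Finset.Icc 2 r).sup (fun s => Nat.choose t (r - s) * exTuran (n - t) s (SimpleGraph.cycleGraph (2 * k)))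
        ≤ exTuran n r (multiCopies (t + 1) (SimpleGraph.cycleGraph (2 * k))) :=
  stmt4_general t r k hr hk
end

section
/- Let t ≥ r ≥ 3 be integers, a ≥ 2(r-1), b ≥ (a-1)! + 1, and let β be a real number with r - 1 - (r-1)(r-2)/(2(a-1)) < β < r - 1 - (r-1)(r-2)/(2a). Then there exists N such that for all n ≥ N the following holds: if G is a graph on n vertices containing t+1 distinct vertices each of which lies in at least n^β/(2(a+b)t) copies of K_r, then G contains t+1 pairwise vertex-disjoint copies of K_{a,b}. -/
open Finset

/-!
Alon and Shikhelman: for `s ≤ a`, a `K_{a,b}`-free graph on `m` vertices has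
`O(m ^ (s - s(s-1)/(2a)))` copies of `K_s`. Induct on `s`: a `K_{s+1}` is a vertex `v` plus a
`K_s` in `N(v)`, which is `K_{a-1,b}`-free; Hölder's inequality bounds the resulting
`∑ d(v) ^ q` by the `a`-th moment of the degrees, and double counting pairs `(v, A)` with `A` an
`a`-subset of `N(v)` (an `a`-set has fewer than `b` common neighbours) gives
`∑ d(v) ^ a = O(m ^ a)`.

Now let `x` be a vertex and `U` a set of `O(1)` vertices avoiding `x`. A `K_r` through `x` either
lies in `{x} ∪ (N(x) \ U)` or is a `K_{r-1}` through `x` plus a vertex of `U`; so if `N(x) \ U`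
has no `K_{a-1,b}`, then `x` lies in `O(n ^ γ)` copies of `K_r` with
`γ = r - 1 - (r-1)(r-2)/(2(a-1)) < β`. For large `n` every `x_i` therefore has a `K_{a-1,b}` in
`N(x_i) \ U`, i.e. a `K_{a,b}` avoiding `U`; taking for `U` the copies already chosen together
with the other `x_j`, the `t + 1` copies are found greedily.
-/

open SimpleGraph Filter

universe u

noncomputable def alonShikhelmanExp (s a : ℕ) : ℝ := s - s * (s - 1) / (2 * a)

lemma alonShikhelmanExp_zero (a : ℕ) : alonShikhelmanExp 0 a = 0 := by
  simp [alonShikhelmanExp]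

lemma alonShikhelmanExp_nonneg {s a : ℕ} (h : s ≤ a + 1) : 0 ≤ alonShikhelmanExp s a := by
  rcases Nat.eq_zero_or_pos a with rfl | ha
  · interval_cases s <;> simp [alonShikhelmanExp]
  have hs : (s : ℝ) ≤ a + 1 := by exact_mod_cast h
  have ha : (1 : ℝ) ≤ a := by exact_mod_cast ha
  rw [alonShikhelmanExp, sub_nonneg, div_le_iff₀ (by positivity)]
  nlinarith [s.cast_nonneg (α := ℝ)]

lemma alonShikhelmanExp_le_self (s a : ℕ) : alonShikhelmanExp s a ≤ s := by
  have : (0 : ℝ) ≤ s * (s - 1) := by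
    rcases s with _ | s
    · simp
    · push_cast; nlinarith
  rw [alonShikhelmanExp, sub_le_self_iff]
  positivity

lemma alonShikhelmanExp_le_succ {s a : ℕ} (h : s ≤ a) :
    alonShikhelmanExp s a ≤ alonShikhelmanExp (s + 1) a := by
  rcases Nat.eq_zero_or_pos a with rfl | ha
  · obtain rfl : s = 0 := by omega
    simp [alonShikhelmanExp]
  have hs : (s : ℝ) ≤ a := by exact_mod_cast h
  have ha : (0 : ℝ) < a := by exact_mod_cast ha
  have key : ((s + 1 : ℝ) * s - s * (s - 1)) / (2 * a) ≤ 1 := by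
    rw [div_le_one (by positivity)]; nlinarith
  rw [sub_div] at key
  simp only [alonShikhelmanExp]
  push_cast
  rw [add_sub_cancel_right]
  linarith

lemma alonShikhelmanExp_succ {s a : ℕ} (h : s < a) :
    alonShikhelmanExp s (a - 1) + 1 - alonShikhelmanExp s (a - 1) / a =
      alonShikhelmanExp (s + 1) a := by
  rcases s.eq_zero_or_pos with rfl | hs
  · simp [alonShikhelmanExp]
  have ha : ((a - 1 : ℕ) : ℝ) = a - 1 := by push_cast [Nat.cast_sub (by omega : 1 ≤ a)]; ring
  have ha1 : (a : ℝ) - 1 ≠ 0 := by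
    rw [sub_ne_zero]; exact_mod_cast (by omega : a ≠ 1)
  have ha0 : (a : ℝ) ≠ 0 := by exact_mod_cast (by omega : a ≠ 0)
  simp only [alonShikhelmanExp, ha]
  field_simp
  push_cast
  ring

lemma alonShikhelmanExp_sub_one_sub_one {r a : ℕ} (hr : 1 ≤ r) (ha : 1 ≤ a) :
    alonShikhelmanExp (r - 1) (a - 1) =
      (r : ℝ) - 1 - ((r : ℝ) - 1) * ((r : ℝ) - 2) / (2 * ((a : ℝ) - 1)) := by
  rw [alonShikhelmanExp, Nat.cast_sub hr, Nat.cast_sub ha]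
  ring

lemma sum_rpow_le_card_rpow_mul_sum_rpow {ι : Type*} (s : Finset ι) {f : ι → ℝ}
    (hf : ∀ i ∈ s, 0 ≤ f i) {p q : ℝ} (hq : 0 ≤ q) (hqp : q ≤ p) :
    ∑ i ∈ s, f i ^ q ≤ (#s : ℝ) ^ (1 - q / p) * (∑ i ∈ s, f i ^ p) ^ (q / p) := by
  rcases hq.eq_or_lt with rfl | hq
  · simp
  have hp : 0 < p := hq.trans_le hqp
  have hsum := Real.rpow_sum_le_const_mul_sum_rpow_of_nonneg (s := s) (f := fun i => f i ^ q)
    ((one_le_div hq).2 hqp) fun i hi => Real.rpow_nonneg (hf i hi) q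
  have hpow : ∀ i ∈ s, (f i ^ q) ^ (p / q) = f i ^ p := fun i hi => by
    rw [← Real.rpow_mul (hf i hi), mul_div_cancel₀ _ hq.ne']
  rw [sum_congr rfl hpow] at hsum
  have hlhs : 0 ≤ ∑ i ∈ s, f i ^ q := sum_nonneg fun i hi => Real.rpow_nonneg (hf i hi) q
  calc ∑ i ∈ s, f i ^ q = ((∑ i ∈ s, f i ^ q) ^ (p / q)) ^ (q / p) := by
        rw [← Real.rpow_mul hlhs, show p / q * (q / p) = 1 by field_simp, Real.rpow_one]
    _ ≤ ((#s : ℝ) ^ (p / q - 1) * ∑ i ∈ s, f i ^ p) ^ (q / p) :=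
        Real.rpow_le_rpow (by positivity) hsum (by positivity)
    _ = (#s : ℝ) ^ (1 - q / p) * (∑ i ∈ s, f i ^ p) ^ (q / p) := by
        rw [Real.mul_rpow (by positivity) (sum_nonneg fun i hi => Real.rpow_nonneg (hf i hi) p),
          ← Real.rpow_mul (by positivity)]
        congr 2
        field_simp

lemma eventually_mul_rpow_lt_rpow {γ β : ℝ} (h : γ < β) (C : ℝ) :
    ∀ᶠ n : ℕ in atTop, C * (n : ℝ) ^ γ < (n : ℝ) ^ β := by
  have htend : Tendsto (fun n : ℕ => (n : ℝ) ^ (β - γ)) atTop atTop :=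
    (tendsto_rpow_atTop (sub_pos.2 h)).comp tendsto_natCast_atTop_atTop
  filter_upwards [htend.eventually_gt_atTop C, eventually_gt_atTop 0] with n hn hn0
  have hpos : (0 : ℝ) < n := by exact_mod_cast hn0
  calc C * (n : ℝ) ^ γ < (n : ℝ) ^ (β - γ) * (n : ℝ) ^ γ :=
        mul_lt_mul_of_pos_right hn (by positivity)
    _ = (n : ℝ) ^ β := by rw [← Real.rpow_add hpos, sub_add_cancel]

lemma Nat.pow_le_two_pow_mul_descFactorial {d k : ℕ} (h : 2 * k ≤ d) :
    d ^ k ≤ 2 ^ k * d.descFactorial k := by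
  have hpow : ∀ n : ℕ, n ^ k = ∏ _i ∈ range k, n := by simp
  rw [Nat.descFactorial_eq_prod_range, hpow d, hpow 2, ← prod_mul_distrib]
  exact prod_le_prod' fun i hi => by rw [mem_range] at hi; omega

lemma Nat.pow_le_mul_choose_add_one (d k : ℕ) : d ^ k ≤ (2 * k) ^ k * (d.choose k + 1) := by
  rcases le_or_gt d (2 * k) with h | h
  · calc d ^ k ≤ (2 * k) ^ k := Nat.pow_le_pow_left h k
      _ ≤ (2 * k) ^ k * (d.choose k + 1) := Nat.le_mul_of_pos_right _ (by omega)
  · calc d ^ k ≤ 2 ^ k * (k.factorial * d.choose k) := by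
          rw [← Nat.descFactorial_eq_factorial_mul_choose]
          exact Nat.pow_le_two_pow_mul_descFactorial h.le
      _ ≤ 2 ^ k * (k ^ k * (d.choose k + 1)) := by
          gcongr
          · exact Nat.factorial_le_pow k
          · omega
      _ = (2 * k) ^ k * (d.choose k + 1) := by rw [mul_pow, mul_assoc]

namespace SimpleGraph

variable {V : Type*} (G : SimpleGraph V)

def HasBicliqueIn (a b : ℕ) (W : Finset V) : Prop :=
  ∃ A B : Finset V, A ⊆ W ∧ B ⊆ W ∧ #A = a ∧ #B = b ∧ G.IsCompleteBetween A B

variable {G} in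
lemma HasBicliqueIn.exists_copy {a b : ℕ} {W : Finset V} (h : G.HasBicliqueIn a b W) :
    ∃ f : Copy (completeBipartiteGraph (Fin a) (Fin b)) G, ∀ z, f z ∈ W := by
  obtain ⟨A, B, hA, hB, hAcard, hBcard, hAB⟩ := h
  refine ⟨.completeBipartiteGraph A B (by simpa using hAcard) (by simpa using hBcard) hAB, ?_⟩
  rintro (p | q)
  · exact hA (by simp [Copy.completeBipartiteGraph])
  · exact hB (by simp [Copy.completeBipartiteGraph])

variable [Fintype V] [DecidableEq V] [DecidableRel G.Adj]

def cliquesIn (s : ℕ) (W : Finset V) : Finset (Finset V) := {S ∈ G.cliqueFinset s | S ⊆ W}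

def cliquesThrough (s : ℕ) (x : V) : Finset (Finset V) := {S ∈ G.cliqueFinset s | x ∈ S}

variable {G}

lemma HasBicliqueIn.of_inter_neighborFinset {a b : ℕ} {W : Finset V} {v : V} (hv : v ∈ W)
    (h : G.HasBicliqueIn a b (G.neighborFinset v ∩ W)) : G.HasBicliqueIn (a + 1) b W := by
  obtain ⟨A, B, hA, hB, hAcard, hBcard, hAB⟩ := h
  have hvA : v ∉ A := fun hvA =>
    G.irrefl ((G.mem_neighborFinset v v).1 (inter_subset_left (hA hvA)))
  refine ⟨insert v A, B, insert_subset hv (hA.trans inter_subset_right),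
    hB.trans inter_subset_right, by rw [card_insert_of_notMem hvA, hAcard], hBcard, ?_⟩
  intro u hu w hw
  rcases mem_insert.1 (mem_coe.1 hu) with rfl | hu
  · exact (G.mem_neighborFinset _ _).1 (inter_subset_left (hB hw))
  · exact hAB hu hw

lemma card_filter_subset_neighborFinset_lt {a b : ℕ} {W A : Finset V}
    (hfree : ¬ G.HasBicliqueIn a b W) (hAW : A ⊆ W) (hA : #A = a) :
    #{v ∈ W | A ⊆ G.neighborFinset v} < b := by
  by_contra! hb
  obtain ⟨B, hB, hBcard⟩ := exists_subset_card_eq hb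
  refine hfree ⟨A, B, hAW, hB.trans (filter_subset _ _), hA, hBcard, fun u hu w hw => ?_⟩
  exact ((G.mem_neighborFinset _ _).1 ((mem_filter.1 (hB hw)).2 hu)).symm

lemma sum_choose_card_inter_neighborFinset_le {a b : ℕ} {W : Finset V}
    (hfree : ¬ G.HasBicliqueIn a b W) :
    ∑ v ∈ W, (#(G.neighborFinset v ∩ W)).choose a ≤ b * (#W).choose a := by
  let r : V → Finset V → Prop := fun v A => A ⊆ G.neighborFinset v
  have habove : ∀ v,
      (W.powersetCard a).bipartiteAbove r v = (G.neighborFinset v ∩ W).powersetCard a := by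
    intro v
    ext A
    simp [r, mem_powersetCard, subset_inter_iff]
    tauto
  calc ∑ v ∈ W, (#(G.neighborFinset v ∩ W)).choose a
      = ∑ v ∈ W, #((W.powersetCard a).bipartiteAbove r v) := by simp [habove]
    _ = ∑ A ∈ W.powersetCard a, #(W.bipartiteBelow r A) :=
        sum_card_bipartiteAbove_eq_sum_card_bipartiteBelow _
    _ ≤ ∑ A ∈ W.powersetCard a, b := sum_le_sum fun A hA =>
        (card_filter_subset_neighborFinset_lt hfree (mem_powersetCard.1 hA).1
          (mem_powersetCard.1 hA).2).le
    _ = b * (#W).choose a := by rw [sum_const, card_powersetCard, smul_eq_mul, mul_comm]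

lemma sum_card_inter_neighborFinset_pow_le {a b : ℕ} (ha : 0 < a) {W : Finset V}
    (hfree : ¬ G.HasBicliqueIn a b W) :
    ∑ v ∈ W, #(G.neighborFinset v ∩ W) ^ a ≤ (2 * a) ^ a * (b + 1) * #W ^ a := by
  calc ∑ v ∈ W, #(G.neighborFinset v ∩ W) ^ a
      ≤ ∑ v ∈ W, (2 * a) ^ a * ((#(G.neighborFinset v ∩ W)).choose a + 1) :=
        sum_le_sum fun v _ => Nat.pow_le_mul_choose_add_one _ _
    _ = (2 * a) ^ a * (∑ v ∈ W, (#(G.neighborFinset v ∩ W)).choose a + #W) := by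
        rw [← mul_sum, sum_add_distrib, sum_const, smul_eq_mul, mul_one]
    _ ≤ (2 * a) ^ a * (b * #W ^ a + #W ^ a) := by
        gcongr
        · exact (sum_choose_card_inter_neighborFinset_le hfree).trans
            (Nat.mul_le_mul_left _ (Nat.choose_le_pow _ _))
        · exact Nat.le_self_pow ha.ne' _
    _ = (2 * a) ^ a * (b + 1) * #W ^ a := by ring

lemma mem_cliquesIn {s : ℕ} {W S : Finset V} :
    S ∈ G.cliquesIn s W ↔ G.IsNClique s S ∧ S ⊆ W := by
  simp [cliquesIn]

lemma mem_cliquesThrough {s : ℕ} {x : V} {S : Finset V} :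
    S ∈ G.cliquesThrough s x ↔ G.IsNClique s S ∧ x ∈ S := by
  simp [cliquesThrough]

lemma card_cliquesIn_zero_le (W : Finset V) : #(G.cliquesIn 0 W) ≤ 1 :=
  card_le_one.2 fun S hS T hT => by
    rw [isNClique_zero.1 (mem_cliquesIn.1 hS).1, isNClique_zero.1 (mem_cliquesIn.1 hT).1]

lemma card_cliquesThrough_one_le (x : V) : #(G.cliquesThrough 1 x) ≤ 1 := by
  refine card_le_one.2 fun S hS T hT => ?_
  obtain ⟨⟨u, rfl⟩, hu⟩ := And.imp_left isNClique_one.1 (mem_cliquesThrough.1 hS)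
  obtain ⟨⟨w, rfl⟩, hw⟩ := And.imp_left isNClique_one.1 (mem_cliquesThrough.1 hT)
  rw [← mem_singleton.1 hu, ← mem_singleton.1 hw]

lemma erase_mem_cliquesIn {s : ℕ} {W S : Finset V} {v : V}
    (hS : G.IsNClique (s + 1) S) (hSW : S ⊆ W) (hv : v ∈ S) :
    S.erase v ∈ G.cliquesIn s (G.neighborFinset v ∩ W) := by
  refine mem_cliquesIn.2 ⟨hS.erase_of_mem hv, fun u hu => ?_⟩
  obtain ⟨huv, hu⟩ := mem_erase.1 hu
  exact mem_inter.2 ⟨(G.mem_neighborFinset _ _).2 (hS.1 hv hu huv.symm), hSW hu⟩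

lemma card_cliquesIn_succ_le (s : ℕ) (W : Finset V) :
    #(G.cliquesIn (s + 1) W) ≤ ∑ v ∈ W, #(G.cliquesIn s (G.neighborFinset v ∩ W)) := by
  have hsub : G.cliquesIn (s + 1) W ⊆
      W.biUnion fun v => (G.cliquesIn s (G.neighborFinset v ∩ W)).image (insert v) := by
    intro S hS
    obtain ⟨hS, hSW⟩ := mem_cliquesIn.1 hS
    obtain ⟨v, hv⟩ : S.Nonempty := card_pos.1 (by rw [hS.2]; omega)
    exact mem_biUnion.2 ⟨v, hSW hv, mem_image.2
      ⟨S.erase v, erase_mem_cliquesIn hS hSW hv, insert_erase hv⟩⟩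
  calc #(G.cliquesIn (s + 1) W) ≤ _ := card_le_card hsub
    _ ≤ _ := card_biUnion_le
    _ ≤ _ := sum_le_sum fun v _ => card_image_le

lemma card_cliquesThrough_succ_le (s : ℕ) {x : V} {U : Finset V} (hx : x ∉ U) :
    #(G.cliquesThrough (s + 1) x) ≤
      #(G.cliquesIn s (G.neighborFinset x ∩ Uᶜ)) + #U * #(G.cliquesThrough s x) := by
  have hsub : G.cliquesThrough (s + 1) x ⊆
      (G.cliquesIn s (G.neighborFinset x ∩ Uᶜ)).image (insert x) ∪
        U.biUnion fun u => (G.cliquesThrough s x).image (insert u) := by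
    intro S hS
    obtain ⟨hS, hxS⟩ := mem_cliquesThrough.1 hS
    by_cases hSU : ∃ u ∈ S, u ∈ U
    · obtain ⟨u, huS, huU⟩ := hSU
      refine mem_union_right _
        (mem_biUnion.2 ⟨u, huU, mem_image.2 ⟨S.erase u, ?_, insert_erase huS⟩⟩)
      exact mem_cliquesThrough.2
        ⟨hS.erase_of_mem huS, mem_erase.2 ⟨fun h => hx (h ▸ huU), hxS⟩⟩
    · push Not at hSU
      refine mem_union_left _ (mem_image.2 ⟨S.erase x, ?_, insert_erase hxS⟩)
      exact erase_mem_cliquesIn hS (fun u hu => mem_compl.2 (hSU u hu)) hxS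
  calc #(G.cliquesThrough (s + 1) x) ≤ _ := card_le_card hsub
    _ ≤ _ := card_union_le _ _
    _ ≤ _ := add_le_add card_image_le
        (card_biUnion_le.trans (sum_le_sum fun u _ => card_image_le))
    _ = _ := by rw [sum_const, smul_eq_mul]

theorem exists_card_cliquesIn_le_of_not_hasBicliqueIn (b : ℕ) {s a : ℕ} (hsa : s ≤ a) :
    ∃ C : ℝ, 0 ≤ C ∧ ∀ {V : Type u} [Fintype V] [DecidableEq V] (G : SimpleGraph V)
      [DecidableRel G.Adj] (W : Finset V), ¬ G.HasBicliqueIn a b W →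
        (#(G.cliquesIn s W) : ℝ) ≤ C * (#W : ℝ) ^ alonShikhelmanExp s a := by
  induction s generalizing a with
  | zero =>
    refine ⟨1, zero_le_one, fun G _ W _ => ?_⟩
    rw [alonShikhelmanExp_zero, Real.rpow_zero, one_mul]
    exact_mod_cast card_cliquesIn_zero_le W
  | succ s ih =>
    obtain ⟨C₀, hC₀, hC₀bound⟩ := ih (a := a - 1) (by omega)
    set K : ℝ := (2 * a) ^ a * (b + 1) with hK
    have hK1 : 1 ≤ K := one_le_mul_of_one_le_of_one_le
      (one_le_pow₀ (by norm_cast; omega)) (by linarith [b.cast_nonneg (α := ℝ)])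
    refine ⟨C₀ * K, by positivity, fun {V} _ _ G _ W hfree => ?_⟩
    set q := alonShikhelmanExp s (a - 1)
    set d : V → ℝ := fun v => #(G.neighborFinset v ∩ W)
    have hq0 : 0 ≤ q := alonShikhelmanExp_nonneg (by omega)
    have hqa : q ≤ a := (alonShikhelmanExp_le_self s _).trans (by norm_cast; omega)
    have hqa' : q / a ≤ 1 := div_le_one_of_le₀ hqa (by positivity)
    have hW : (0 : ℝ) ≤ #W := by positivity
    have hmoment : ∑ v ∈ W, d v ^ (a : ℝ) ≤ K * (#W : ℝ) ^ (a : ℝ) := by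
      simp only [d, Real.rpow_natCast, hK]
      exact_mod_cast sum_card_inter_neighborFinset_pow_le (by omega) hfree
    calc (#(G.cliquesIn (s + 1) W) : ℝ)
        ≤ ∑ v ∈ W, (#(G.cliquesIn s (G.neighborFinset v ∩ W)) : ℝ) := by
          exact_mod_cast card_cliquesIn_succ_le s W
      _ ≤ ∑ v ∈ W, C₀ * d v ^ q := sum_le_sum fun v hv => hC₀bound G _ fun h =>
          hfree (Nat.sub_add_cancel (by omega : 1 ≤ a) ▸ h.of_inter_neighborFinset hv)
      _ ≤ C₀ * ((#W : ℝ) ^ (1 - q / a) * (K * (#W : ℝ) ^ (a : ℝ)) ^ (q / a)) := by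
          rw [← mul_sum]
          gcongr
          exact (sum_rpow_le_card_rpow_mul_sum_rpow W (fun v _ => by positivity) hq0 hqa).trans
            (mul_le_mul_of_nonneg_left (Real.rpow_le_rpow (sum_nonneg fun v _ => by positivity)
              hmoment (by positivity)) (by positivity))
      _ = C₀ * K ^ (q / a) * ((#W : ℝ) ^ (1 - q / a) * (#W : ℝ) ^ q) := by
          rw [Real.mul_rpow (by positivity) (by positivity), ← Real.rpow_mul hW,
            mul_div_cancel₀ _ (by norm_cast; omega)]
          ring
      _ ≤ C₀ * K * (#W : ℝ) ^ alonShikhelmanExp (s + 1) a := by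
          rw [← Real.rpow_add_of_nonneg hW (sub_nonneg.2 hqa') hq0,
            show 1 - q / a + q = q + 1 - q / a by ring, alonShikhelmanExp_succ (by omega)]
          exact mul_le_mul_of_nonneg_right (mul_le_mul_of_nonneg_left
            (Real.rpow_le_self_of_one_le hK1 hqa') hC₀) (by positivity)

theorem exists_card_cliquesThrough_le (b c : ℕ) {s a : ℕ} (hsa : s ≤ a) :
    ∃ C : ℝ, 0 ≤ C ∧ ∀ {V : Type u} [Fintype V] [DecidableEq V] (G : SimpleGraph V)
      [DecidableRel G.Adj] (x : V) (U : Finset V), x ∉ U → #U ≤ c →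
        ¬ G.HasBicliqueIn a b (G.neighborFinset x ∩ Uᶜ) →
          (#(G.cliquesThrough (s + 1) x) : ℝ) ≤
            C * (Fintype.card V : ℝ) ^ alonShikhelmanExp s a := by
  induction s with
  | zero =>
    refine ⟨1, zero_le_one, fun G _ x _ _ _ _ => ?_⟩
    rw [alonShikhelmanExp_zero, Real.rpow_zero, one_mul]
    exact_mod_cast card_cliquesThrough_one_le x
  | succ s ih =>
    obtain ⟨C₁, hC₁, hC₁bound⟩ := ih (by omega)
    obtain ⟨C₂, hC₂, hC₂bound⟩ := exists_card_cliquesIn_le_of_not_hasBicliqueIn b hsa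
    refine ⟨C₂ + c * C₁, by positivity, fun {V} _ _ G _ x U hx hU hfree => ?_⟩
    set n : ℝ := (Fintype.card V : ℝ)
    set e := alonShikhelmanExp (s + 1) a
    have hn : 1 ≤ n := by simp only [n]; exact_mod_cast Fintype.card_pos_iff.2 ⟨x⟩
    have hWn : (#(G.neighborFinset x ∩ Uᶜ) : ℝ) ≤ n := by
      simp only [n]; exact_mod_cast card_le_univ _
    calc (#(G.cliquesThrough (s + 1 + 1) x) : ℝ)
        ≤ #(G.cliquesIn (s + 1) (G.neighborFinset x ∩ Uᶜ)) +
            #U * #(G.cliquesThrough (s + 1) x) := by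
          exact_mod_cast card_cliquesThrough_succ_le (s + 1) hx
      _ ≤ C₂ * (#(G.neighborFinset x ∩ Uᶜ) : ℝ) ^ e +
            c * (C₁ * n ^ alonShikhelmanExp s a) := by
          exact add_le_add (hC₂bound G _ hfree)
            (mul_le_mul (by exact_mod_cast hU) (hC₁bound G x U hx hU hfree) (by positivity)
              (by positivity))
      _ ≤ C₂ * n ^ e + c * (C₁ * n ^ e) := by
          gcongr
          · exact alonShikhelmanExp_nonneg (by omega)
          · exact alonShikhelmanExp_le_succ (by omega)
      _ = (C₂ + c * C₁) * n ^ e := by ring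

theorem containsCopy_multiCopies_of_forall_avoiding {α V : Type*} [Fintype α]
    [DecidableEq V] {H : SimpleGraph α} {G : SimpleGraph V} {m : ℕ} (x : Fin m → V)
    (hx : Function.Injective x)
    (h : ∀ i (U : Finset V), x i ∉ U → #U ≤ m * (Fintype.card α + 1) →
      ∃ f : Copy H G, ∀ z, f z ∉ U) :
    (multiCopies m H).ContainsCopy G := by
  -- Vertices reserved for index `j`: its copy once chosen, its root `x j` before.
  let S (I : Finset (Fin m)) (F : Fin m → Copy H G) (j : Fin m) : Finset V :=
    if j ∈ I then univ.image (F j) else {x j}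
  have key : ∀ I : Finset (Fin m), ∃ F : Fin m → Copy H G,
      ∀ j k, j ≠ k → Disjoint (S I F j) (S I F k) := by
    intro I
    induction I using Finset.induction_on with
    | empty =>
      obtain ⟨F⟩ : Nonempty (Fin m → Copy H G) :=
        ⟨fun i => (h i ∅ (notMem_empty _) (by simp)).choose⟩
      exact ⟨F, fun j k hjk => by simpa [S] using hx.ne hjk⟩
    | insert i I hi ih =>
      obtain ⟨F, hF⟩ := ih
      set U := (univ.erase i).biUnion (S I F)
      have hxU : x i ∉ U := by
        simp only [U, mem_biUnion, mem_erase, not_exists, not_and]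
        rintro k ⟨hki, -⟩ hk
        exact Finset.disjoint_left.1 (hF i k (Ne.symm hki)) (by simp [S, hi]) hk
      have hU : #U ≤ m * (Fintype.card α + 1) := by
        calc #U ≤ ∑ k ∈ univ.erase i, #(S I F k) := card_biUnion_le
          _ ≤ ∑ _k : Fin m, (Fintype.card α + 1) := by
            refine (sum_le_sum_of_subset (subset_univ _)).trans (sum_le_sum fun k _ => ?_)
            simp only [S]
            split_ifs
            · exact (card_image_le.trans (card_univ.le)).trans (Nat.le_succ _)
            · simp
          _ = m * (Fintype.card α + 1) := by simp
      obtain ⟨f, hf⟩ := h i U hxU hU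
      have hfU : ∀ k, k ≠ i → Disjoint (univ.image f) (S I F k) := fun k hk =>
        Finset.disjoint_left.2 fun v hv hvk => by
          obtain ⟨z, -, rfl⟩ := mem_image.1 hv
          exact hf z (mem_biUnion.2 ⟨k, mem_erase.2 ⟨hk, mem_univ _⟩, hvk⟩)
      have hS : ∀ j, S (insert i I) (Function.update F i f) j =
          if j = i then univ.image f else S I F j := by
        intro j
        by_cases hj : j = i
        · subst hj; simp [S]
        · simp [S, hj]
      refine ⟨Function.update F i f, fun j k hjk => ?_⟩
      rw [hS, hS]
      split_ifs with hj hk hk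
      · exact absurd (hj.trans hk.symm) hjk
      · exact hfU k hk
      · exact (hfU j hj).symm
      · exact hF j k hjk
  obtain ⟨F, hF⟩ := key univ
  have hindex : ∀ i j z w, F i z = F j w → i = j := fun i j z w heq => by
    by_contra hij
    have hSuniv : ∀ k, S univ F k = univ.image (F k) := fun k => if_pos (mem_univ k)
    have hzi : F i z ∈ S univ F i := by rw [hSuniv]; exact mem_image_of_mem _ (mem_univ z)
    have hwj : F i z ∈ S univ F j := by rw [hSuniv, heq]; exact mem_image_of_mem _ (mem_univ w)
    exact Finset.disjoint_left.1 (hF i j hij) hzi hwj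
  refine ⟨⟨fun p => F p.1 p.2, ?_⟩, ?_⟩
  · rintro ⟨i, z⟩ ⟨j, w⟩ ⟨rfl : i = j, hzw⟩
    exact (F i).toHom.map_adj hzw
  · rintro ⟨i, z⟩ ⟨j, w⟩ (heq : F i z = F j w)
    obtain rfl := hindex i j z w heq
    rw [(F i).injective heq]

end SimpleGraph

lemma cliqueCountOn_eq_card_cliquesThrough {V : Type*} [Fintype V] [DecidableEq V]
    (G : SimpleGraph V) [DecidableRel G.Adj] (r : ℕ) (x : V) :
    cliqueCountOn G r x = #(G.cliquesThrough r x) := by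
  rw [cliqueCountOn, Nat.card_eq_fintype_card, Fintype.card_subtype]
  simp [SimpleGraph.cliquesThrough, SimpleGraph.cliqueFinset, filter_filter]

theorem stmt10_general (t r a b : ℕ) (htr : r ≤ t) (hr : 3 ≤ r) (ha : 2 * (r - 1) ≤ a) (β : ℝ)
    (hβ1 : (r : ℝ) - 1 - ((r : ℝ) - 1) * ((r : ℝ) - 2) / (2 * ((a : ℝ) - 1)) < β) :
    ∃ N : ℕ, ∀ n : ℕ, N ≤ n → ∀ (V : Type) (_ : Fintype V), ∀ G : SimpleGraph V,
      Fintype.card V = n →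
      ∀ x : Fin (t + 1) → V, Function.Injective x →
      (∀ i, (n : ℝ) ^ β / (2 * ((a : ℝ) + (b : ℝ)) * (t : ℝ)) ≤ (cliqueCountOn G r (x i) : ℝ)) →
      (multiCopies (t + 1) (completeBipartiteGraph (Fin a) (Fin b))).ContainsCopy G := by
  classical
  obtain ⟨C, -, hC⟩ := exists_card_cliquesThrough_le.{0} b ((t + 1) * (a + b + 1))
    (s := r - 1) (a := a - 1) (by omega)
  set D : ℝ := 2 * ((a : ℝ) + b) * t
  have hD : 0 < D := by
    have : (0 : ℝ) < t := by exact_mod_cast (by omega : 0 < t)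
    have : (0 : ℝ) < a := by exact_mod_cast (by omega : 0 < a)
    positivity
  have hγβ : alonShikhelmanExp (r - 1) (a - 1) < β := by
    rwa [alonShikhelmanExp_sub_one_sub_one (by omega) (by omega)]
  obtain ⟨N, hN⟩ := eventually_atTop.1 (eventually_mul_rpow_lt_rpow hγβ (C * D))
  refine ⟨N, fun n hn V _ G hV x hx hcliq => ?_⟩
  refine containsCopy_multiCopies_of_forall_avoiding x hx fun i U hxU hU => ?_
  by_contra hnone
  have hfree : ¬ G.HasBicliqueIn (a - 1) b (G.neighborFinset (x i) ∩ Uᶜ) := fun hK => by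
    obtain ⟨f, hf⟩ := (Nat.sub_add_cancel (by omega : 1 ≤ a) ▸
      hK.of_inter_neighborFinset (mem_compl.2 hxU)).exists_copy
    exact hnone ⟨f, fun z => mem_compl.1 (hf z)⟩
  have hcount := hC G (x i) U hxU (by simpa using hU) hfree
  rw [Nat.sub_add_cancel (by omega : 1 ≤ r), ← cliqueCountOn_eq_card_cliquesThrough, hV]
    at hcount
  have hlower := (div_le_iff₀ hD).1 (hcliq i)
  have := mul_le_mul_of_nonneg_right hcount hD.le
  linarith [hN n hn]

/-- `t+1` vertices in many `K_r`'s give `t+1` disjoint copies of `K_{a,b}`. -/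
theorem stmt10 (t r a b : ℕ) (htr : r ≤ t) (hr : 3 ≤ r) (ha : 2 * (r - 1) ≤ a)
    (hb : Nat.factorial (a - 1) + 1 ≤ b) (β : ℝ)
    (hβ1 : (r : ℝ) - 1 - ((r : ℝ) - 1) * ((r : ℝ) - 2) / (2 * ((a : ℝ) - 1)) < β)
    (hβ2 : β < (r : ℝ) - 1 - ((r : ℝ) - 1) * ((r : ℝ) - 2) / (2 * (a : ℝ))) :
    ∃ N : ℕ, ∀ n : ℕ, N ≤ n → ∀ (V : Type) (_ : Fintype V), ∀ G : SimpleGraph V,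
      Fintype.card V = n →
      ∀ x : Fin (t + 1) → V, Function.Injective x →
      (∀ i, (n : ℝ) ^ β / (2 * ((a : ℝ) + (b : ℝ)) * (t : ℝ)) ≤ (cliqueCountOn G r (x i) : ℝ)) →
      (multiCopies (t + 1) (completeBipartiteGraph (Fin a) (Fin b))).ContainsCopy G :=
  stmt10_general t r a b htr hr ha β hβ1
end
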